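/- arXiv:math/0010261 — 4 statements merged into one kernel-verified Lean document; each statement's English description precedes it below -/
import Mathlib

section
/- Let X and Y be Tychonoff (completely regular Hausdorff) spaces and let E and F be nontrivial real normed vector spaces. If there exists a biseparating map T : C*(X,E) → C*(Y,F), then the Stone–Čech compactifications StoneCech X and StoneCech Y are homeomorphic. -/
/-!
For `y ∈ Y`, call `p ∈ βX` a support point of `y` if every neighbourhood `U` of `p` carries a
function `f`, supported in `U`, with `(T f) y ≠ 0`. If none existed, compactness of `βX` and a
finite partition of unity would write a preimage of a nowhere-vanishing constant as a sum of
functions each killed at `y` by `T`. Since `T` is separating, a support point lies in the closure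
of the image of the support of every `f` with `(T f) y ≠ 0`, which makes any choice of support
points a continuous map `Y → βX`. Doing the same for `T⁻¹` gives `X → βY`, and the separating
property of `T`, applied to `f` and `T⁻¹ g` for bump functions `f`, `g`, shows that the Stone–Čech
extensions of these two maps are mutually inverse on the dense images of `Y` and `X`.
-/

open scoped BoundedContinuousFunction
open Function Set Topology Filter

theorem forall_norm_mul_norm_eq_zero_iff {α E F : Type*} [NormedAddCommGroup E]
    [NormedAddCommGroup F] {f : α → E} {g : α → F} :
    (∀ x, ‖f x‖ * ‖g x‖ = 0) ↔ Disjoint (support f) (support g) := by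
  simp [disjoint_left, or_iff_not_imp_left]

namespace BoundedContinuousFunction

variable {X Y E F : Type*} [TopologicalSpace X] [TopologicalSpace Y]
  [NormedAddCommGroup E] [NormedAddCommGroup F]

def IsSeparating (T : (X →ᵇ E) → (Y →ᵇ F)) : Prop :=
  ∀ f g : X →ᵇ E, Disjoint (support f) (support g) → Disjoint (support (T f)) (support (T g))

def IsSupportPoint (T : (X →ᵇ E) → (Y →ᵇ F)) (y : Y) (p : StoneCech X) : Prop :=
  ∀ U ∈ 𝓝 p, ∃ f : X →ᵇ E, support f ⊆ stoneCechUnit ⁻¹' U ∧ T f y ≠ 0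

theorem IsSupportPoint.mem_closure {T : (X →ᵇ E) → (Y →ᵇ F)} (hT : IsSeparating T) {y : Y}
    {p : StoneCech X} (hp : IsSupportPoint T y p) {f : X →ᵇ E} (hf : T f y ≠ 0) :
    p ∈ closure (stoneCechUnit '' support f) := by
  refine mem_closure_iff_nhds.2 fun U hU => ?_
  obtain ⟨g, hgU, hgy⟩ := hp U hU
  obtain ⟨x, hfx, hgx⟩ := not_disjoint_iff.1 fun hfg => disjoint_left.1 (hT f g hfg) hf hgy
  exact ⟨stoneCechUnit x, hgU hgx, x, hfx, rfl⟩

variable [NormedSpace ℝ E]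

noncomputable def ofStoneCech (φ : C(StoneCech X, ℝ)) : X →ᵇ ℝ :=
  (mkOfCompact φ).compContinuous ⟨stoneCechUnit, continuous_stoneCechUnit⟩

@[simp]
theorem ofStoneCech_apply (φ : C(StoneCech X, ℝ)) (x : X) :
    ofStoneCech φ x = φ (stoneCechUnit x) := rfl

@[simp]
theorem ofStoneCech_smul_apply (φ : C(StoneCech X, ℝ)) (f : X →ᵇ E) (x : X) :
    (ofStoneCech φ • f) x = φ (stoneCechUnit x) • f x := rfl

theorem support_ofStoneCech_smul_subset (φ : C(StoneCech X, ℝ)) (f : X →ᵇ E) :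
    support (ofStoneCech φ • f) ⊆ stoneCechUnit ⁻¹' support φ := fun x hx => by
  rw [mem_support, ofStoneCech_smul_apply] at hx
  exact left_ne_zero_of_smul hx

theorem sum_ofStoneCech_partitionOfUnity {ι : Type*} [Fintype ι]
    (ρ : PartitionOfUnity ι (StoneCech X)) : ∑ i, ofStoneCech (ρ i) = 1 := by
  ext x
  simp only [coe_sum, Finset.sum_apply, ofStoneCech_apply, coe_one, Pi.one_apply]
  rw [← finsum_eq_sum_of_fintype]
  exact ρ.sum_eq_one (mem_univ _)

theorem exists_support_subset_apply_eq {U : Set (StoneCech X)} {x : X}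
    (hU : U ∈ 𝓝 (stoneCechUnit x)) (e : E) :
    ∃ f : X →ᵇ E, support f ⊆ stoneCechUnit ⁻¹' U ∧ f x = e := by
  obtain ⟨φ, hφU, hφx, -⟩ := exists_continuous_zero_one_of_isClosed isOpen_interior.isClosed_compl
    isClosed_singleton (disjoint_singleton_right.2 (not_not.2 (mem_interior_iff_mem_nhds.2 hU)))
  refine ⟨ofStoneCech φ • const X e, (support_ofStoneCech_smul_subset φ _).trans ?_, ?_⟩
  · exact preimage_mono fun p hp => interior_subset (not_not.1 fun h => hp (hφU h))
  · simp [hφx (mem_singleton _)]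

variable {𝓕 : Type*} [FunLike 𝓕 (X →ᵇ E) (Y →ᵇ F)] [AddMonoidHomClass 𝓕 (X →ᵇ E) (Y →ᵇ F)]

theorem exists_isSupportPoint [Nontrivial F] (T : 𝓕) (hT : Surjective T) (y : Y) :
    ∃ p, IsSupportPoint T y p := by
  by_contra! h
  simp only [IsSupportPoint, not_forall, not_exists, not_and, not_not, exists_prop] at h
  choose U hU hTU using h
  obtain ⟨t, ht⟩ := CompactSpace.elim_nhds_subcover (fun p => interior (U p))
    fun p => isOpen_interior.mem_nhds (mem_interior_iff_mem_nhds.2 (hU p))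
  obtain ⟨ρ, hρ⟩ := PartitionOfUnity.exists_isSubordinate isClosed_univ
    (fun p : t => interior (U p)) (fun _ => isOpen_interior)
    (by rw [iUnion_subtype, ht]; exact subset_rfl)
  obtain ⟨e, he⟩ := exists_ne (0 : F)
  obtain ⟨f, hf⟩ := hT (const Y e)
  have hT0 : ∀ p : t, T (ofStoneCech (ρ p) • f) y = 0 := fun p =>
    hTU p _ <| (support_ofStoneCech_smul_subset _ f).trans <|
      preimage_mono <| (subset_tsupport _).trans <| (hρ p).trans interior_subset
  have hfρ : ∑ p : t, ofStoneCech (ρ p) • f = f := by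
    refine (Finset.sum_smul (R := X →ᵇ ℝ) (M := X →ᵇ E) ..).symm.trans ?_
    rw [sum_ofStoneCech_partitionOfUnity]
    exact one_smul _ f
  have hfy : T f y = e := by rw [hf]; rfl
  apply he
  rw [← hfy, ← hfρ, map_sum, coe_sum, Finset.sum_apply]
  exact Finset.sum_eq_zero fun p _ => hT0 p

noncomputable def supportMap [Nontrivial F] (T : 𝓕) (hT : Surjective T) (y : Y) : StoneCech X :=
  (exists_isSupportPoint T hT y).choose

theorem isSupportPoint_supportMap [Nontrivial F] (T : 𝓕) (hT : Surjective T) (y : Y) :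
    IsSupportPoint T y (supportMap T hT y) :=
  (exists_isSupportPoint T hT y).choose_spec

theorem continuous_supportMap [Nontrivial F] {T : 𝓕} (hT : Surjective T)
    (hsep : IsSeparating T) : Continuous (supportMap T hT) := by
  refine continuous_iff_continuousAt.2 fun y₀ => (closed_nhds_basis _).tendsto_right_iff.2 ?_
  rintro s ⟨hs, hs_closed⟩
  obtain ⟨f, hfs, hfy₀⟩ := isSupportPoint_supportMap T hT y₀ s hs
  filter_upwards [(T f).continuous.continuousAt.eventually_ne hfy₀] with y hfy
  exact closure_minimal (image_subset_iff.2 hfs) hs_closed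
    ((isSupportPoint_supportMap T hT y).mem_closure hsep hfy)

variable [NormedSpace ℝ F] [Nontrivial E] [Nontrivial F]

theorem stoneCechExtend_supportMap_symm_supportMap (T : (X →ᵇ E) ≃+ (Y →ᵇ F))
    (hT : IsSeparating T) (hT' : IsSeparating T.symm) (y : Y) :
    stoneCechExtend (continuous_supportMap T.symm.surjective hT')
      (supportMap T T.surjective y) = stoneCechUnit y := by
  by_contra hne
  obtain ⟨W₁, W₂, hW₁, hW₂, hyW₁, hyW₂, hW⟩ := t2_separation hne
  obtain ⟨f, hfW₁, hfy⟩ := isSupportPoint_supportMap T T.surjective y _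
    ((hW₁.preimage (continuous_stoneCechExtend _)).mem_nhds hyW₁)
  obtain ⟨e, he⟩ := exists_ne (0 : F)
  obtain ⟨g, hgW₂, rfl⟩ := exists_support_subset_apply_eq (hW₂.mem_nhds hyW₂) e
  have hfg : Disjoint (support f) (support (T.symm g)) := by
    refine disjoint_left.2 fun x hfx hgx => disjoint_left.1 (hW.closure_right hW₁) ?_
      (closure_mono (image_subset_iff.2 hgW₂)
        ((isSupportPoint_supportMap T.symm T.symm.surjective x).mem_closure hT' hgx))
    simpa only [mem_preimage, stoneCechExtend_stoneCechUnit] using hfW₁ hfx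
  have := hT f (T.symm g) hfg
  rw [T.apply_symm_apply] at this
  exact disjoint_left.1 this hfy he

end BoundedContinuousFunction

noncomputable def stoneCechHomeomorph {X Y : Type*} [TopologicalSpace X] [TopologicalSpace Y]
    {h : Y → StoneCech X} {k : X → StoneCech Y} (hh : Continuous h) (hk : Continuous k)
    (hkh : ∀ y, stoneCechExtend hk (h y) = stoneCechUnit y)
    (hhk : ∀ x, stoneCechExtend hh (k x) = stoneCechUnit x) :
    StoneCech X ≃ₜ StoneCech Y where
  toFun := stoneCechExtend hk
  invFun := stoneCechExtend hh
  left_inv := congrFun <| stoneCech_hom_ext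
    ((continuous_stoneCechExtend hh).comp (continuous_stoneCechExtend hk)) continuous_id <|
      funext fun x => by simp [stoneCechExtend_stoneCechUnit, hhk]
  right_inv := congrFun <| stoneCech_hom_ext
    ((continuous_stoneCechExtend hk).comp (continuous_stoneCechExtend hh)) continuous_id <|
      funext fun y => by simp [stoneCechExtend_stoneCechUnit, hkh]
  continuous_toFun := continuous_stoneCechExtend hk
  continuous_invFun := continuous_stoneCechExtend hh

open BoundedContinuousFunction in
theorem stmt_0_general {X Y E F : Type*}
    [TopologicalSpace X] [TopologicalSpace Y]
    [NormedAddCommGroup E] [NormedSpace ℝ E] [Nontrivial E]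
    [NormedAddCommGroup F] [NormedSpace ℝ F] [Nontrivial F]
    (T : (X →ᵇ E) → (Y →ᵇ F))
    (hbij : Function.Bijective T)
    (hadd : ∀ f g : X →ᵇ E, T (f + g) = T f + T g)
    (hsep : ∀ f g : X →ᵇ E, (∀ x, ‖f x‖ * ‖g x‖ = 0) → ∀ y, ‖T f y‖ * ‖T g y‖ = 0)
    (hsep' : ∀ f g : X →ᵇ E, (∀ y, ‖T f y‖ * ‖T g y‖ = 0) → ∀ x, ‖f x‖ * ‖g x‖ = 0) :
    Nonempty (StoneCech X ≃ₜ StoneCech Y) := by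
  let e : (X →ᵇ E) ≃+ (Y →ᵇ F) := AddEquiv.ofBijective (AddMonoidHom.mk' T hadd) hbij
  have he : IsSeparating e := fun f g hfg =>
    forall_norm_mul_norm_eq_zero_iff.1 (hsep f g (forall_norm_mul_norm_eq_zero_iff.2 hfg))
  have he' : IsSeparating e.symm := fun u v huv => by
    have hTe : ∀ w, T (e.symm w) = w := e.apply_symm_apply
    refine forall_norm_mul_norm_eq_zero_iff.1 (hsep' _ _ ?_)
    simpa only [hTe] using forall_norm_mul_norm_eq_zero_iff.2 huv
  exact ⟨stoneCechHomeomorph (continuous_supportMap e.surjective he)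
    (continuous_supportMap e.symm.surjective he')
    (stoneCechExtend_supportMap_symm_supportMap e he he')
    (stoneCechExtend_supportMap_symm_supportMap e.symm he' he)⟩

/-- If `X`, `Y` are Tychonoff spaces, `E`, `F` nontrivial real normed spaces,
and there exists a biseparating map `T : C*(X,E) → C*(Y,F)`, then `StoneCech X` and
`StoneCech Y` are homeomorphic. -/
theorem stmt_0 {X Y E F : Type*}
    [TopologicalSpace X] [T35Space X] [TopologicalSpace Y] [T35Space Y]
    [NormedAddCommGroup E] [NormedSpace ℝ E] [Nontrivial E]
    [NormedAddCommGroup F] [NormedSpace ℝ F] [Nontrivial F]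
    (T : (X →ᵇ E) → (Y →ᵇ F))
    (hbij : Function.Bijective T)
    (hadd : ∀ f g : X →ᵇ E, T (f + g) = T f + T g)
    (hsep : ∀ f g : X →ᵇ E, (∀ x, ‖f x‖ * ‖g x‖ = 0) → ∀ y, ‖T f y‖ * ‖T g y‖ = 0)
    (hsep' : ∀ f g : X →ᵇ E, (∀ y, ‖T f y‖ * ‖T g y‖ = 0) → ∀ x, ‖f x‖ * ‖g x‖ = 0) :
    Nonempty (StoneCech X ≃ₜ StoneCech Y) :=
  stmt_0_general T hbij hadd hsep hsep'
end

section
/- Let X and Y be Tychonoff (completely regular Hausdorff) spaces and let E and F be nontrivial real normed vector spaces. If there exists a biseparating map T : C(X,E) → C(Y,F), then the Stone–Čech compactifications StoneCech X and StoneCech Y are homeomorphic. -/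
/-!
A separating additive map `T : C(X,E) → C(Y,F)` assigns to each `y : Y` a point `δ y` of
`StoneCech X` at which `f ↦ T f y` is concentrated: `T f y ≠ 0` forces `δ y` into the closure
of the cozero set of `f`. Such a point exists by compactness of `StoneCech X` and a partition
of unity, and separation makes `δ` continuous. Doing the same for `T⁻¹` gives
`δ' : X → StoneCech Y`, and the Stone–Čech extensions of `δ` and `δ'` are mutually inverse
because points of `StoneCech Y` are separated by cozero sets of functions in `C(Y,F)`.
-/

open Set Function Topology

section SupportMap

variable {X Y E F : Type*} [TopologicalSpace X] [TopologicalSpace Y]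
  [NormedAddCommGroup E] [NormedAddCommGroup F]

theorem ContinuousMap.exists_sum_eq_forall_support_subset {K ι : Type*} [TopologicalSpace K]
    [CompactSpace K] [T2Space K] [Fintype ι] [NormedSpace ℝ E] (φ : C(X, K)) {U : ι → Set K}
    (hU : ∀ i, IsOpen (U i)) (hcov : univ ⊆ ⋃ i, U i) (f : C(X, E)) :
    ∃ g : ι → C(X, E), ∑ i, g i = f ∧ ∀ i, support (g i) ⊆ φ ⁻¹' U i := by
  obtain ⟨ρ, hρ⟩ := PartitionOfUnity.exists_isSubordinate isClosed_univ U hU hcov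
  refine ⟨fun i => ⟨fun x => ρ i (φ x) • f x, by fun_prop⟩, ?_, fun i x hx => ?_⟩
  · ext x
    have hsum : ∑ i, ρ i (φ x) = 1 := by
      simpa [finsum_eq_sum_of_fintype] using ρ.sum_eq_one (mem_univ (φ x))
    simp [← Finset.sum_smul, hsum]
  · exact hρ i (subset_tsupport _ (left_ne_zero_of_smul hx))

theorem disjoint_support_iff_forall_norm_mul_norm_eq_zero {α : Type*} {f g : α → E} :
    Disjoint (support f) (support g) ↔ ∀ x, ‖f x‖ * ‖g x‖ = 0 := by
  simp [disjoint_left, or_iff_not_imp_left]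

def IsSeparating (T : C(X, E) → C(Y, F)) : Prop :=
  ∀ f g : C(X, E), Disjoint (support f) (support g) → Disjoint (support (T f)) (support (T g))

def IsSupportPoint (T : C(X, E) → C(Y, F)) (y : Y) (p : StoneCech X) : Prop :=
  ∀ U ∈ 𝓝 p, ∃ f : C(X, E), support f ⊆ stoneCechUnit ⁻¹' U ∧ T f y ≠ 0

def IsSupportMap (T : C(X, E) → C(Y, F)) (δ : Y → StoneCech X) : Prop :=
  ∀ y f, T f y ≠ 0 → δ y ∈ closure (stoneCechUnit '' support f)

theorem exists_isSupportPoint [NormedSpace ℝ E] (T : C(X, E) →+ C(Y, F)) {y : Y}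
    (hy : ∃ f, T f y ≠ 0) :
    ∃ p, IsSupportPoint T y p := by
  by_contra! hkill
  simp only [IsSupportPoint, not_forall, not_exists, not_and, not_not] at hkill
  choose U hU hkill using hkill
  obtain ⟨t, ht⟩ := isCompact_univ.elim_finite_subcover (fun p => interior (U p))
    (fun _ => isOpen_interior) fun p _ => mem_iUnion.2 ⟨p, mem_interior_iff_mem_nhds.2 (hU p)⟩
  obtain ⟨f, hf⟩ := hy
  obtain ⟨g, rfl, hg⟩ := ContinuousMap.exists_sum_eq_forall_support_subset
    ⟨stoneCechUnit, continuous_stoneCechUnit⟩ (U := fun p : t => interior (U p))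
    (fun _ => isOpen_interior) (by simpa [iUnion_subtype] using ht) f
  refine hf ?_
  rw [map_sum, ContinuousMap.sum_apply]
  exact Finset.sum_eq_zero fun p _ =>
    hkill p (g p) ((hg p).trans (preimage_mono interior_subset))

theorem IsSupportPoint.mem_closure_image_support {T : C(X, E) → C(Y, F)} (hT : IsSeparating T)
    {y : Y} {p : StoneCech X} (hp : IsSupportPoint T y p) {f : C(X, E)} (hf : T f y ≠ 0) :
    p ∈ closure (stoneCechUnit '' support f) := by
  by_contra hout
  obtain ⟨g, hg, hgy⟩ := hp _ (isClosed_closure.isOpen_compl.mem_nhds hout)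
  have hdisj : Disjoint (support g) (support f) :=
    disjoint_left.2 fun x hgx hfx => hg hgx (subset_closure (mem_image_of_mem _ hfx))
  exact disjoint_left.1 (hT g f hdisj) hgy hf

theorem continuous_of_forall_isSupportPoint {T : C(X, E) → C(Y, F)} (hT : IsSeparating T)
    {δ : Y → StoneCech X} (hδ : ∀ y, IsSupportPoint T y (δ y)) : Continuous δ := by
  refine continuous_iff_continuousAt.2 fun y => ?_
  rw [ContinuousAt, (closed_nhds_basis (δ y)).tendsto_right_iff]
  rintro s ⟨hs, hs_closed⟩
  obtain ⟨f, hf, hfy⟩ := hδ y s hs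
  filter_upwards [(isOpen_compl_singleton.preimage (T f).continuous).mem_nhds hfy] with z hz
  exact closure_minimal (image_subset_iff.2 hf) hs_closed
    ((hδ z).mem_closure_image_support hT hz)

theorem exists_apply_ne_zero_of_surjective [Nontrivial F] {T : C(X, E) → C(Y, F)}
    (hT : Surjective T) (y : Y) : ∃ f, T f y ≠ 0 := by
  obtain ⟨e, he⟩ := exists_ne (0 : F)
  obtain ⟨f, hf⟩ := hT (ContinuousMap.const Y e)
  exact ⟨f, by simpa [hf] using he⟩

theorem exists_continuous_isSupportMap [NormedSpace ℝ E] (T : C(X, E) →+ C(Y, F))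
    (hT : IsSeparating T) (hne : ∀ y, ∃ f, T f y ≠ 0) :
    ∃ δ : C(Y, StoneCech X), IsSupportMap T δ := by
  choose δ hδ using fun y => exists_isSupportPoint T (hne y)
  exact ⟨⟨δ, continuous_of_forall_isSupportPoint hT hδ⟩,
    fun y _ hf => (hδ y).mem_closure_image_support hT hf⟩

theorem eq_stoneCechUnit_of_forall_mem_closure [NormedSpace ℝ F] [Nontrivial F]
    {q : StoneCech Y} {y : Y}
    (h : ∀ u : C(Y, F), u y ≠ 0 → q ∈ closure (stoneCechUnit '' support u)) :
    q = stoneCechUnit y := by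
  by_contra hne
  obtain ⟨U, V, hU, hV, hqU, hyV, hUV⟩ := t2_separation hne
  obtain ⟨φ, hφV, hφy, -⟩ := exists_continuous_zero_one_of_isClosed hV.isClosed_compl
    isClosed_singleton (disjoint_singleton_right.2 fun h => h hyV)
  obtain ⟨e, he⟩ := exists_ne (0 : F)
  let u : C(Y, F) :=
    ⟨fun w => φ (stoneCechUnit w) • e,
      (φ.continuous.comp continuous_stoneCechUnit).smul continuous_const⟩
  have hsupp : stoneCechUnit '' support u ⊆ Uᶜ := by
    rintro _ ⟨w, hw, rfl⟩
    refine disjoint_right.1 hUV (not_not.1 fun hwV => hw ?_)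
    simp [u, hφV hwV]
  refine closure_minimal hsupp hU.isClosed_compl (h u ?_) hqU
  simp [u, hφy rfl, he]

theorem stoneCechExtend_apply_of_isSupportMap [NormedSpace ℝ F] [Nontrivial F]
    (T : C(X, E) ≃ C(Y, F)) {δ : Y → StoneCech X} {δ' : C(X, StoneCech Y)}
    (hδ : IsSupportMap T δ) (hδ' : IsSupportMap T.symm δ') (y : Y) :
    stoneCechExtend δ'.continuous (δ y) = stoneCechUnit y := by
  refine eq_stoneCechUnit_of_forall_mem_closure (F := F) fun u hu => ?_
  obtain ⟨f, rfl⟩ := T.surjective u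
  have hmaps : MapsTo (stoneCechExtend δ'.continuous) (closure (stoneCechUnit '' support f))
      (closure (stoneCechUnit '' support (T f))) := by
    refine MapsTo.closure_left ?_ (continuous_stoneCechExtend _) isClosed_closure
    rintro _ ⟨x, hx, rfl⟩
    rw [stoneCechExtend_stoneCechUnit]
    exact hδ' x (T f) (by simpa using hx)
  exact hmaps (hδ y f hu)

noncomputable def Homeomorph.ofStoneCechExtend {δ : C(Y, StoneCech X)} {δ' : C(X, StoneCech Y)}
    (h : ∀ y, stoneCechExtend δ'.continuous (δ y) = stoneCechUnit y)
    (h' : ∀ x, stoneCechExtend δ.continuous (δ' x) = stoneCechUnit x) :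
    StoneCech X ≃ₜ StoneCech Y where
  toFun := stoneCechExtend δ'.continuous
  invFun := stoneCechExtend δ.continuous
  left_inv := congrFun <| stoneCech_hom_ext
    ((continuous_stoneCechExtend _).comp (continuous_stoneCechExtend _)) continuous_id
    (funext fun x => by simp [h'])
  right_inv := congrFun <| stoneCech_hom_ext
    ((continuous_stoneCechExtend _).comp (continuous_stoneCechExtend _)) continuous_id
    (funext fun y => by simp [h])
  continuous_toFun := continuous_stoneCechExtend _
  continuous_invFun := continuous_stoneCechExtend _

end SupportMap

theorem stmt_1_general {X Y E F : Type*}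
    [TopologicalSpace X] [TopologicalSpace Y]
    [NormedAddCommGroup E] [NormedSpace ℝ E] [Nontrivial E]
    [NormedAddCommGroup F] [NormedSpace ℝ F] [Nontrivial F]
    (T : C(X, E) → C(Y, F))
    (hbij : Function.Bijective T)
    (hadd : ∀ f g : C(X, E), T (f + g) = T f + T g)
    (hsep : ∀ f g : C(X, E), (∀ x, ‖f x‖ * ‖g x‖ = 0) → ∀ y, ‖T f y‖ * ‖T g y‖ = 0)
    (hsep' : ∀ f g : C(X, E), (∀ y, ‖T f y‖ * ‖T g y‖ = 0) → ∀ x, ‖f x‖ * ‖g x‖ = 0) :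
    Nonempty (StoneCech X ≃ₜ StoneCech Y) := by
  let A : C(X, E) ≃+ C(Y, F) := AddEquiv.mk' (Equiv.ofBijective T hbij) hadd
  have hA : IsSeparating A := fun f g h =>
    disjoint_support_iff_forall_norm_mul_norm_eq_zero.2
      (hsep f g (disjoint_support_iff_forall_norm_mul_norm_eq_zero.1 h))
  have hA' : IsSeparating A.symm := fun u v h => by
    rw [← A.apply_symm_apply u, ← A.apply_symm_apply v] at h
    exact disjoint_support_iff_forall_norm_mul_norm_eq_zero.2
      (hsep' _ _ (disjoint_support_iff_forall_norm_mul_norm_eq_zero.1 h))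
  obtain ⟨δ, hδ⟩ := exists_continuous_isSupportMap A.toAddMonoidHom hA
    (exists_apply_ne_zero_of_surjective A.surjective)
  obtain ⟨δ', hδ'⟩ := exists_continuous_isSupportMap A.symm.toAddMonoidHom hA'
    (exists_apply_ne_zero_of_surjective A.symm.surjective)
  exact ⟨Homeomorph.ofStoneCechExtend
    (stoneCechExtend_apply_of_isSupportMap A.toEquiv hδ hδ')
    (stoneCechExtend_apply_of_isSupportMap A.symm.toEquiv hδ' hδ)⟩

/-- If `X`, `Y` are Tychonoff spaces, `E`, `F` nontrivial real normed spaces,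
and there exists a biseparating map `T : C(X,E) → C(Y,F)`, then `StoneCech X` and
`StoneCech Y` are homeomorphic. -/
theorem stmt_1 {X Y E F : Type*}
    [TopologicalSpace X] [T35Space X] [TopologicalSpace Y] [T35Space Y]
    [NormedAddCommGroup E] [NormedSpace ℝ E] [Nontrivial E]
    [NormedAddCommGroup F] [NormedSpace ℝ F] [Nontrivial F]
    (T : C(X, E) → C(Y, F))
    (hbij : Function.Bijective T)
    (hadd : ∀ f g : C(X, E), T (f + g) = T f + T g)
    (hsep : ∀ f g : C(X, E), (∀ x, ‖f x‖ * ‖g x‖ = 0) → ∀ y, ‖T f y‖ * ‖T g y‖ = 0)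
    (hsep' : ∀ f g : C(X, E), (∀ y, ‖T f y‖ * ‖T g y‖ = 0) → ∀ x, ‖f x‖ * ‖g x‖ = 0) :
    Nonempty (StoneCech X ≃ₜ StoneCech Y) :=
  stmt_1_general T hbij hadd hsep hsep'
end

section
/- Let X and Y be Tychonoff (completely regular Hausdorff) spaces and let E and F be nontrivial real normed vector spaces. If there exists a biseparating map T : C(X,E) → C(Y,F), then the realcompactifications υX and υY are homeomorphic. -/
/-!
For `y ∈ Y` there is exactly one point `φ y ∈ βX` each of whose neighbourhoods contains the
cozero set of some `f` with `T f y ≠ 0`: it exists by additivity of `T` and a partition of unity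
on the compact space `βX`, and it is unique because `T` is separating. Whenever `T f y ≠ 0`,
`φ y` lies in the closure of `coz f`; so `φ` is continuous, and its extension `βY → βX` is
inverse to the map obtained in the same way from `T⁻¹`.

This homeomorphism `βY ≃ βX` maps `υY` into `υX` because `φ y ∈ υX` for `y ∈ Y`. Otherwise some
`g ∈ C(X, ℝ)` is infinite at `φ y`, so `φ y` is in the closure of every `{N ≤ |g|}`. Cut `X` into
the levels `hat n ∘ |g|`. As `T` is separating, if `T ((hat n ∘ |g|) • v) y ≠ 0` then `T h y`
depends only on `h` on that level, where a preimage `f` of a nonzero constant is the sum of its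
three adjacent level pieces while a fixed weighted sum of pieces is `n` times one of them. This
bounds `n` near `y`, and pulling the closure condition back through the inverse homeomorphism
gives a contradiction.
-/

open OnePoint

/-- The realcompactification `υX` of a Tychonoff space `X`, realized as the subspace of
`StoneCech X` of points where the extension of every real-valued continuous function
(composed with the embedding `ℝ ↪ OnePoint ℝ`) is finite. -/
def upsilonSet (X : Type*) [TopologicalSpace X] : Set (StoneCech X) :=
  {p | ∀ g : C(X, ℝ),
    stoneCechExtend (OnePoint.continuous_coe.comp g.continuous) p ≠ (∞ : OnePoint ℝ)}

open Set Function Topology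

namespace Biseparating

def hat (n : ℕ) : C(ℝ, ℝ) := ⟨fun t => max 0 (1 - |t - n|), by fun_prop⟩

theorem hat_apply (n : ℕ) (t : ℝ) : hat n t = max 0 (1 - |t - n|) := rfl

theorem hat_ne_zero_iff {n : ℕ} {t : ℝ} : hat n t ≠ 0 ↔ |t - n| < 1 := by
  rw [hat_apply, Ne, max_eq_left_iff, not_le, sub_pos]
theorem hat_floor_ne_zero {t : ℝ} (ht : 0 ≤ t) : hat ⌊t⌋₊ t ≠ 0 := by
  rw [hat_ne_zero_iff, abs_of_nonneg (sub_nonneg.2 (Nat.floor_le ht))]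
  linarith [Nat.lt_floor_add_one t]

theorem sum_range_three_hat {m : ℕ} {t : ℝ} (ht : hat (m + 1) t ≠ 0) :
    ∑ i ∈ Finset.range 3, hat (m + i) t = 1 := by
  rw [hat_ne_zero_iff, abs_lt] at ht
  simp only [Finset.sum_range_succ, Finset.sum_range_zero, hat_apply]
  push_cast [add_zero, zero_add] at ht ⊢
  rcases le_total t (m + 1) with h | h
  · rw [abs_of_nonneg (by linarith : 0 ≤ t - m), abs_of_nonpos (by linarith : t - (m + 1) ≤ 0),
      abs_of_nonpos (by linarith : t - (m + 2) ≤ 0), max_eq_right (by linarith),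
      max_eq_right (by linarith), max_eq_left (by linarith)]
    ring
  · rw [abs_of_nonneg (by linarith : 0 ≤ t - m), abs_of_nonneg (by linarith : 0 ≤ t - (m + 1)),
      abs_of_nonpos (by linarith : t - (m + 2) ≤ 0), max_eq_left (by linarith),
      max_eq_right (by linarith), max_eq_right (by linarith)]
    ring

theorem locallyFinite_support_hat : LocallyFinite fun n => support (hat n) := by
  intro t
  refine ⟨Iio (t + 1), Iio_mem_nhds (lt_add_one t), (finite_Iio ⌈t + 2⌉₊).subset ?_⟩
  rintro n ⟨s, hs, hst⟩
  have := (abs_lt.1 (hat_ne_zero_iff.1 hs)).1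
  have : (n : ℝ) < ⌈t + 2⌉₊ := by linarith [Nat.le_ceil (t + 2), (mem_Iio.1 hst)]
  exact_mod_cast this

noncomputable def hatSeries (c : ℕ → ℝ) : C(ℝ, ℝ) :=
  ⟨fun t => ∑ᶠ n, c n * hat n t,
    continuous_finsum (fun n => continuous_const.mul (hat n).continuous)
      (locallyFinite_support_hat.subset fun _ => support_mul_subset_right _ _)⟩

theorem hatSeries_apply_eq_single {c : ℕ → ℝ} {t : ℝ} (n : ℕ)
    (h : ∀ k ≠ n, c k = 0 ∨ hat k t = 0) : hatSeries c t = c n * hat n t :=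
  finsum_eq_single _ n fun k hk => by rcases h k hk with h | h <;> simp [h]

theorem hatSeries_mod_three_eqOn {m k : ℕ} (hmk : m ≤ k) (hkm : k ≤ m + 2) :
    EqOn (hatSeries fun n => if n % 3 = k % 3 then (n : ℝ) else 0) (k • hat k)
      (support (hat (m + 1))) := by
  intro t ht
  rw [hatSeries_apply_eq_single k fun n hn => ?_]
  · simp [nsmul_eq_mul]
  by_cases hnk : n % 3 = k % 3
  · refine .inr (not_not.1 fun hnt => ?_)
    have h₁ := abs_lt.1 (hat_ne_zero_iff.1 hnt)
    have h₂ := abs_lt.1 (hat_ne_zero_iff.1 ht)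
    push_cast at h₂
    have hlo : m < n + 1 := by exact_mod_cast (by linarith : (m : ℝ) < n + 1)
    have hhi : n < m + 3 := by exact_mod_cast (by linarith : (n : ℝ) < m + 3)
    omega
  · simp [hnk]

variable {X Y E F : Type*} [TopologicalSpace X] [TopologicalSpace Y]

theorem mem_closure_image_stoneCechUnit_of_stoneCechExtend_eq_infty (g : C(X, ℝ)) (r : ℝ)
    {q : StoneCech X}
    (hq : stoneCechExtend (OnePoint.continuous_coe.comp g.continuous) q = ∞) :
    q ∈ closure (stoneCechUnit '' {x | r ≤ |g x|}) := by
  by_contra hqr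
  have hq' : q ∈ closure (stoneCechUnit '' {x | |g x| < r}) := by
    have hcover := denseRange_stoneCechUnit (α := X) q
    rw [← image_univ, ← union_compl_self {x | r ≤ |g x|}, image_union, closure_union] at hcover
    simpa [hqr, compl_ofPred, not_le] using hcover
  have hmaps : MapsTo (stoneCechExtend (OnePoint.continuous_coe.comp g.continuous))
      (stoneCechUnit '' {x | |g x| < r}) (((↑) : ℝ → OnePoint ℝ) '' Icc (-r) r) := by
    rintro _ ⟨x, hx, rfl⟩
    rw [stoneCechExtend_stoneCechUnit]
    exact mem_image_of_mem _ (abs_le.1 (le_of_lt hx))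
  have hclosed : IsClosed (((↑) : ℝ → OnePoint ℝ) '' Icc (-r) r) :=
    (isCompact_Icc.image OnePoint.continuous_coe).isClosed
  obtain ⟨t, -, ht⟩ := hclosed.closure_subset (hmaps.closure (continuous_stoneCechExtend _) hq')
  exact OnePoint.coe_ne_infty t (ht.trans hq)

theorem ne_infty_of_mem_upsilonSet {G : StoneCech X → OnePoint ℝ} (hG : Continuous G)
    (hfin : ∀ x, G (stoneCechUnit x) ≠ ∞) {p : StoneCech X} (hp : p ∈ upsilonSet X) :
    G p ≠ ∞ := by
  choose g hg using fun x => OnePoint.ne_infty_iff_exists.1 (hfin x)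
  have hgc : Continuous g := OnePoint.isOpenEmbedding_coe.isEmbedding.continuous_iff.2 <|
    (hG.comp continuous_stoneCechUnit).congr fun x => (hg x).symm
  have hext : stoneCechExtend (OnePoint.continuous_coe.comp hgc) = G :=
    stoneCech_hom_ext (continuous_stoneCechExtend _) hG <| by
      funext x
      simp [stoneCechExtend_stoneCechUnit, hg]
  exact hext ▸ hp ⟨g, hgc⟩

theorem exists_apply_ne_zero_notMem_closure [NormedAddCommGroup F] [NormedSpace ℝ F]
    [Nontrivial F] {y : Y} {q : StoneCech Y} (hq : q ≠ stoneCechUnit y) :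
    ∃ u : C(Y, F), u y ≠ 0 ∧ q ∉ closure (stoneCechUnit '' support u) := by
  obtain ⟨V, W, hVo, hWo, hqV, hyW, hVW⟩ := t2_separation hq
  obtain ⟨φ, hφ0, hφ1, -⟩ := exists_continuous_zero_one_of_isClosed hWo.isClosed_compl
    isClosed_singleton (disjoint_singleton_right.2 (not_not.2 hyW))
  obtain ⟨w, hw⟩ := exists_ne (0 : F)
  let u : C(Y, F) := ⟨fun y' => φ (stoneCechUnit y') • w,
    (φ.continuous.comp continuous_stoneCechUnit).smul continuous_const⟩
  refine ⟨u, by simpa [u, hφ1 rfl] using hw, ?_⟩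
  refine fun hmem => (hVW.closure_right hVo).ne_of_mem hqV (closure_mono ?_ hmem) rfl
  rintro _ ⟨y', hy', rfl⟩
  by_contra hW
  exact hy' (by simp [u, hφ0 hW])

variable [NormedAddCommGroup E] [NormedAddCommGroup F]

def IsSeparating (T : C(X, E) → C(Y, F)) : Prop :=
  ∀ f g : C(X, E), (∀ x, ‖f x‖ * ‖g x‖ = 0) → ∀ y, ‖T f y‖ * ‖T g y‖ = 0

theorem IsSeparating.apply_eq_zero {T : C(X, E) → C(Y, F)} (hT : IsSeparating T)
    {f g : C(X, E)} (hfg : Disjoint (support f) (support g)) {y : Y} (hf : T f y ≠ 0) :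
    T g y = 0 := by
  have hprod := hT f g (fun x => by
    rcases em (f x = 0) with h | h
    · simp [h]
    · simp [notMem_support.1 (disjoint_left.1 hfg (mem_support.2 h))]) y
  simpa [hf] using hprod

theorem IsSeparating.apply_eq_apply_of_eqOn {Φ : Type*} [FunLike Φ C(X, E) C(Y, F)]
    [AddMonoidHomClass Φ C(X, E) C(Y, F)] {T : Φ} (hT : IsSeparating T) {h f₁ f₂ : C(X, E)}
    (heq : EqOn f₁ f₂ (support h)) {y : Y} (hh : T h y ≠ 0) : T f₁ y = T f₂ y := by
  have hdisj : Disjoint (support h) (support ⇑(f₁ - f₂)) :=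
    disjoint_left.2 fun x hx => by simp [heq hx]
  simpa [map_sub, sub_eq_zero] using hT.apply_eq_zero hdisj hh

def IsSupportPoint (T : C(X, E) → C(Y, F)) (y : Y) (p : StoneCech X) : Prop :=
  ∀ U, IsOpen U → p ∈ U → ∃ f : C(X, E), support f ⊆ stoneCechUnit ⁻¹' U ∧ T f y ≠ 0

theorem not_isSupportPoint_iff {T : C(X, E) → C(Y, F)} {y : Y} {p : StoneCech X} :
    ¬IsSupportPoint T y p ↔
      ∃ V, IsOpen V ∧ p ∈ V ∧ ∀ f : C(X, E), support f ⊆ stoneCechUnit ⁻¹' V → T f y = 0 := by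
  simp [IsSupportPoint]

theorem IsSeparating.isSupportPoint_unique {T : C(X, E) → C(Y, F)} (hT : IsSeparating T) {y : Y}
    {p q : StoneCech X} (hp : IsSupportPoint T y p) (hq : IsSupportPoint T y q) : p = q := by
  by_contra hpq
  obtain ⟨U, V, hUo, hVo, hpU, hqV, hUV⟩ := t2_separation hpq
  obtain ⟨f, hfU, hf⟩ := hp U hUo hpU
  obtain ⟨g, hgV, hg⟩ := hq V hVo hqV
  exact hg (hT.apply_eq_zero ((hUV.preimage _).mono hfU hgV) hf)

variable [NormedSpace ℝ E]

theorem apply_eq_zero_of_forall_exists_isOpen {Φ : Type*} [FunLike Φ C(X, E) C(Y, F)]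
    [AddMonoidHomClass Φ C(X, E) C(Y, F)] (T : Φ) (f : C(X, E)) (y : Y)
    (h : ∀ p : StoneCech X, ∃ V, IsOpen V ∧ p ∈ V ∧
      ∀ g : C(X, E), support g ⊆ stoneCechUnit ⁻¹' V ∩ support f → T g y = 0) :
    T f y = 0 := by
  classical
  choose V hVo hpV hV using h
  obtain ⟨s, hs⟩ := isCompact_univ.elim_finite_subcover V hVo fun p _ => mem_iUnion.2 ⟨p, hpV p⟩
  obtain ⟨ρ, hρ⟩ := PartitionOfUnity.exists_isSubordinate isClosed_univ (fun i : s => V i)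
    (fun i => hVo i) fun p _ => by simpa using hs (mem_univ p)
  let ι : C(X, StoneCech X) := ⟨stoneCechUnit, continuous_stoneCechUnit⟩
  have hf : f = ∑ i, (ρ i).comp ι • f := by
    ext x
    have hsum : ∑ i, ρ i (stoneCechUnit x) = 1 := by
      rw [← finsum_eq_sum_of_fintype]
      exact ρ.sum_eq_one (mem_univ _)
    simp only [ContinuousMap.sum_apply, ContinuousMap.smul_apply', ContinuousMap.comp_apply,
      ContinuousMap.coe_mk, ι, ← Finset.sum_smul, hsum, one_smul]
  rw [hf, map_sum, ContinuousMap.sum_apply]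
  refine Finset.sum_eq_zero fun i _ => hV i _ fun x hx => ?_
  rw [mem_support, ContinuousMap.smul_apply', smul_ne_zero_iff] at hx
  exact ⟨hρ i (subset_closure hx.1), hx.2⟩

theorem IsSeparating.apply_eq_sum_hat_comp_smul {Φ : Type*} [FunLike Φ C(X, E) C(Y, F)]
    [AddMonoidHomClass Φ C(X, E) C(Y, F)] {T : Φ} (hT : IsSeparating T) (G : C(X, ℝ))
    (f : C(X, E)) {u : C(X, E)} {m : ℕ} {y : Y} (hu : T ((hat (m + 1)).comp G • u) y ≠ 0) :
    T f y = ∑ i ∈ Finset.range 3, T ((hat (m + i)).comp G • f) y := by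
  rw [← ContinuousMap.sum_apply, ← map_sum]
  refine hT.apply_eq_apply_of_eqOn (fun x hx => ?_) hu
  rw [mem_support, ContinuousMap.smul_apply'] at hx
  simp only [ContinuousMap.sum_apply, ContinuousMap.smul_apply', ContinuousMap.comp_apply,
    ← Finset.sum_smul, sum_range_three_hat (left_ne_zero_of_smul hx), one_smul]

theorem IsSeparating.apply_hatSeries_comp_smul_eq {Φ : Type*} [FunLike Φ C(X, E) C(Y, F)]
    [AddMonoidHomClass Φ C(X, E) C(Y, F)] {T : Φ} (hT : IsSeparating T) (G : C(X, ℝ))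
    (f : C(X, E)) {u : C(X, E)} {m k : ℕ} (hmk : m ≤ k) (hkm : k ≤ m + 2) {y : Y}
    (hu : T ((hat (m + 1)).comp G • u) y ≠ 0) :
    T ((hatSeries fun n => if n % 3 = k % 3 then (n : ℝ) else 0).comp G • f) y =
      k • T ((hat k).comp G • f) y := by
  rw [← ContinuousMap.smul_apply, ← map_nsmul, ← smul_assoc, ← ContinuousMap.smul_comp]
  refine hT.apply_eq_apply_of_eqOn (fun x hx => ?_) hu
  rw [mem_support, ContinuousMap.smul_apply'] at hx
  simp only [ContinuousMap.smul_apply', ContinuousMap.comp_apply]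
  rw [hatSeries_mod_three_eqOn hmk hkm (left_ne_zero_of_smul hx)]
  rfl

theorem exists_isSupportPoint (T : C(X, E) ≃+ C(Y, F)) [Nontrivial F] (y : Y) :
    ∃ p, IsSupportPoint T y p := by
  obtain ⟨w, hw⟩ := exists_ne (0 : F)
  by_contra! hnone
  have h0 : T (T.symm (ContinuousMap.const Y w)) y = 0 :=
    apply_eq_zero_of_forall_exists_isOpen T _ y fun p => by
      obtain ⟨V, hVo, hpV, hV⟩ := not_isSupportPoint_iff.1 (hnone p)
      exact ⟨V, hVo, hpV, fun g hg => hV g (hg.trans inter_subset_left)⟩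
  simp [hw] at h0

variable [Nontrivial F]

noncomputable def supportPoint (T : C(X, E) ≃+ C(Y, F)) (y : Y) : StoneCech X :=
  (exists_isSupportPoint T y).choose

theorem isSupportPoint_supportPoint (T : C(X, E) ≃+ C(Y, F)) (y : Y) :
    IsSupportPoint T y (supportPoint T y) :=
  (exists_isSupportPoint T y).choose_spec

variable {T : C(X, E) ≃+ C(Y, F)}

theorem IsSeparating.supportPoint_mem_closure (hT : IsSeparating T) {f : C(X, E)} {y : Y}
    (hf : T f y ≠ 0) : supportPoint T y ∈ closure (stoneCechUnit '' support f) := by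
  by_contra hy
  refine hf (apply_eq_zero_of_forall_exists_isOpen T f y fun p => ?_)
  by_cases hp : p ∈ closure (stoneCechUnit '' support f)
  · have hne : ¬IsSupportPoint T y p := fun h =>
      hy (hT.isSupportPoint_unique h (isSupportPoint_supportPoint T y) ▸ hp)
    obtain ⟨V, hVo, hpV, hV⟩ := not_isSupportPoint_iff.1 hne
    exact ⟨V, hVo, hpV, fun g hg => hV g (hg.trans inter_subset_left)⟩
  · refine ⟨_, isClosed_closure.isOpen_compl, hp, fun g hg => ?_⟩
    have hg0 : g = 0 := by
      ext x
      by_contra hx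
      obtain ⟨hxc, hxf⟩ := hg hx
      exact hxc (subset_closure (mem_image_of_mem _ hxf))
    simp [hg0]

theorem IsSeparating.continuous_supportPoint (hT : IsSeparating T) :
    Continuous (supportPoint T) := by
  refine continuous_iff_continuousAt.2 fun y => ?_
  refine (closed_nhds_basis (supportPoint T y)).tendsto_right_iff.2 fun C ⟨hC, hCc⟩ => ?_
  obtain ⟨f, hfC, hf⟩ := isSupportPoint_supportPoint T y _ isOpen_interior
    (mem_interior_iff_mem_nhds.2 hC)
  filter_upwards [(T f).continuous.continuousAt.eventually_ne hf] with y' hy'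
  refine closure_minimal ?_ hCc (hT.supportPoint_mem_closure hy')
  exact (image_mono hfC).trans ((image_preimage_subset _ _).trans interior_subset)

noncomputable def IsSeparating.supportMap (hT : IsSeparating T) : StoneCech Y → StoneCech X :=
  stoneCechExtend hT.continuous_supportPoint

theorem IsSeparating.continuous_supportMap (hT : IsSeparating T) : Continuous hT.supportMap :=
  continuous_stoneCechExtend _

theorem IsSeparating.supportMap_stoneCechUnit (hT : IsSeparating T) (y : Y) :
    hT.supportMap (stoneCechUnit y) = supportPoint T y :=
  stoneCechExtend_stoneCechUnit _ y

theorem IsSeparating.mapsTo_supportMap_closure (hT : IsSeparating T) {s : Set Y} {t : Set X}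
    (h : ∀ y ∈ s, ∃ f, T f y ≠ 0 ∧ support f ⊆ t) :
    MapsTo hT.supportMap (closure (stoneCechUnit '' s)) (closure (stoneCechUnit '' t)) := by
  refine MapsTo.closure_left ?_ hT.continuous_supportMap isClosed_closure
  rintro _ ⟨y, hy, rfl⟩
  obtain ⟨f, hf, hft⟩ := h y hy
  rw [hT.supportMap_stoneCechUnit]
  exact closure_mono (image_mono hft) (hT.supportPoint_mem_closure hf)

variable [NormedSpace ℝ F]

theorem IsSeparating.exists_eventually_apply_hat_comp_smul_eq_zero (hT : IsSeparating T)
    (G : C(X, ℝ)) (v : E) (y₀ : Y) :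
    ∃ N : ℕ, ∀ᶠ y in 𝓝 y₀, ∀ n, N < n → T ((hat n).comp G • ContinuousMap.const X v) y = 0 := by
  obtain ⟨w, hw⟩ := exists_ne (0 : F)
  let f := T.symm (ContinuousMap.const Y w)
  -- `T` is only additive, so the weights are natural numbers; grouping the levels by residue
  -- mod 3 puts each of the three levels that meet `support (hat (m + 1))` alone into one `W j`.
  let W : ℕ → C(X, E) := fun j =>
    (hatSeries fun n => if n % 3 = j then (n : ℝ) else 0).comp G • f
  let B : Y → ℝ := fun y => ∑ j ∈ Finset.range 3, ‖T (W j) y‖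
  have hB : Continuous B := continuous_finsetSum _ fun j _ => (T (W j)).continuous.norm
  obtain ⟨N, hN⟩ := exists_nat_gt (3 * (B y₀ + 1) / ‖w‖)
  refine ⟨N, ?_⟩
  filter_upwards [hB.continuousAt.eventually_lt continuousAt_const (lt_add_one (B y₀))]
    with y hy n hn
  by_contra hne
  obtain ⟨m, rfl⟩ : ∃ m, n = m + 1 := ⟨n - 1, by omega⟩
  have hsum : w = ∑ i ∈ Finset.range 3, T ((hat (m + i)).comp G • f) y := by
    rw [← hT.apply_eq_sum_hat_comp_smul G f hne]
    simp [f]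
  have hpiece : ∀ i ∈ Finset.range 3, (m : ℝ) * ‖T ((hat (m + i)).comp G • f) y‖ ≤ B y :=
    fun i hi => calc
      (m : ℝ) * ‖T ((hat (m + i)).comp G • f) y‖
          ≤ (m + i : ℕ) * ‖T ((hat (m + i)).comp G • f) y‖ := by gcongr; simp
      _ = ‖T (W ((m + i) % 3)) y‖ := by
        have hi3 : i < 3 := Finset.mem_range.1 hi
        rw [hT.apply_hatSeries_comp_smul_eq G f (by omega) (by omega) hne, RCLike.norm_nsmul ℝ,
          nsmul_eq_mul]
      _ ≤ B y := Finset.single_le_sum (f := fun j => ‖T (W j) y‖) (fun j _ => norm_nonneg _)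
          (Finset.mem_range.2 (Nat.mod_lt _ (by norm_num)))
  have hwB : (m : ℝ) * ‖w‖ ≤ 3 * B y := calc
    (m : ℝ) * ‖w‖ ≤ m * ∑ i ∈ Finset.range 3, ‖T ((hat (m + i)).comp G • f) y‖ := by
      gcongr
      rw [hsum]
      exact norm_sum_le _ _
    _ ≤ ∑ i ∈ Finset.range 3, B y := by
      rw [Finset.mul_sum]
      exact Finset.sum_le_sum hpiece
    _ = 3 * B y := by simp
  have hNm : (N : ℝ) * ‖w‖ ≤ m * ‖w‖ :=
    mul_le_mul_of_nonneg_right (by exact_mod_cast Nat.lt_succ_iff.1 hn) (norm_nonneg w)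
  rw [div_lt_iff₀ (norm_pos_iff.2 hw)] at hN
  linarith

variable [Nontrivial E]

theorem IsSeparating.supportMap_supportPoint (hT : IsSeparating T) (hT' : IsSeparating T.symm)
    (y : Y) : hT'.supportMap (supportPoint T y) = stoneCechUnit y := by
  by_contra hne
  obtain ⟨u, hu, hq⟩ := exists_apply_ne_zero_notMem_closure (F := F) hne
  refine hq (hT'.mapsTo_supportMap_closure (fun x hx => ⟨u, hx, subset_rfl⟩)
    (hT.supportPoint_mem_closure (f := T.symm u) ?_))
  simpa using hu

theorem IsSeparating.supportMap_supportMap (hT : IsSeparating T) (hT' : IsSeparating T.symm)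
    (p : StoneCech Y) : hT'.supportMap (hT.supportMap p) = p := by
  refine congrFun (stoneCech_hom_ext (hT'.continuous_supportMap.comp hT.continuous_supportMap)
    continuous_id (funext fun y => ?_)) p
  simp [hT.supportMap_stoneCechUnit, hT.supportMap_supportPoint hT']

noncomputable def IsSeparating.supportHomeomorph (hT : IsSeparating T) (hT' : IsSeparating T.symm) :
    StoneCech Y ≃ₜ StoneCech X where
  toFun := hT.supportMap
  invFun := hT'.supportMap
  left_inv := hT.supportMap_supportMap hT'
  right_inv := hT'.supportMap_supportMap hT
  continuous_toFun := hT.continuous_supportMap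
  continuous_invFun := hT'.continuous_supportMap

theorem IsSeparating.supportPoint_mem_upsilonSet [CompletelyRegularSpace Y] (hT : IsSeparating T)
    (hT' : IsSeparating T.symm) (y₀ : Y) : supportPoint T y₀ ∈ upsilonSet X := by
  intro g hg
  obtain ⟨v, hv⟩ := exists_ne (0 : E)
  let piece : ℕ → C(X, E) := fun n => (hat n).comp |g| • ContinuousMap.const X v
  obtain ⟨N, hN⟩ := hT.exists_eventually_apply_hat_comp_smul_eq_zero |g| v y₀
  let t : Set Y := ⋃ n > N, support (T (piece n))
  have hmaps : MapsTo hT'.supportMap (closure (stoneCechUnit '' {x | (N + 1 : ℝ) ≤ |g x|}))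
      (closure (stoneCechUnit '' t)) := by
    refine hT'.mapsTo_supportMap_closure fun x hx =>
      ⟨T (piece ⌊|g x|⌋₊), ?_, fun y hy => mem_iUnion₂.2 ⟨_, Nat.le_floor ?_, hy⟩⟩
    · simpa [piece, hv] using hat_floor_ne_zero (abs_nonneg (g x))
    · exact_mod_cast hx
  have hy₀ : y₀ ∈ closure t := by
    rw [isInducing_stoneCechUnit.closure_eq_preimage_closure_image, mem_preimage,
      ← hT.supportMap_supportPoint hT']
    exact hmaps (mem_closure_image_stoneCechUnit_of_stoneCechExtend_eq_infty g _ hg)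
  obtain ⟨y, hyt, hy⟩ := ((mem_closure_iff_frequently.1 hy₀).and_eventually hN).exists
  obtain ⟨n, hn, hyn⟩ := mem_iUnion₂.1 hyt
  exact hyn (hy n hn)

theorem IsSeparating.supportMap_mem_upsilonSet [CompletelyRegularSpace Y] (hT : IsSeparating T)
    (hT' : IsSeparating T.symm) {p : StoneCech Y} (hp : p ∈ upsilonSet Y) :
    hT.supportMap p ∈ upsilonSet X := fun g =>
  ne_infty_of_mem_upsilonSet ((continuous_stoneCechExtend _).comp hT.continuous_supportMap)
    (fun y => by
      simpa [hT.supportMap_stoneCechUnit] using hT.supportPoint_mem_upsilonSet hT' y g) hp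

theorem IsSeparating.preimage_supportHomeomorph_upsilonSet [CompletelyRegularSpace X]
    [CompletelyRegularSpace Y] (hT : IsSeparating T) (hT' : IsSeparating T.symm) :
    hT.supportHomeomorph hT' ⁻¹' upsilonSet X = upsilonSet Y := by
  refine Subset.antisymm (fun p hp => ?_) fun p hp => hT.supportMap_mem_upsilonSet hT' hp
  rw [← hT.supportMap_supportMap hT' p]
  exact hT'.supportMap_mem_upsilonSet hT hp

end Biseparating

/-- If `X`, `Y` are Tychonoff spaces, `E`, `F` nontrivial real normed spaces,
and there exists a biseparating map `T : C(X,E) → C(Y,F)`, then the realcompactifications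
`υX` and `υY` are homeomorphic. -/
theorem stmt_8 {X Y E F : Type*}
    [TopologicalSpace X] [T35Space X] [TopologicalSpace Y] [T35Space Y]
    [NormedAddCommGroup E] [NormedSpace ℝ E] [Nontrivial E]
    [NormedAddCommGroup F] [NormedSpace ℝ F] [Nontrivial F]
    (T : C(X, E) → C(Y, F))
    (hbij : Function.Bijective T)
    (hadd : ∀ f g : C(X, E), T (f + g) = T f + T g)
    (hsep : ∀ f g : C(X, E), (∀ x, ‖f x‖ * ‖g x‖ = 0) → ∀ y, ‖T f y‖ * ‖T g y‖ = 0)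
    (hsep' : ∀ f g : C(X, E), (∀ y, ‖T f y‖ * ‖T g y‖ = 0) → ∀ x, ‖f x‖ * ‖g x‖ = 0) :
    Nonempty (upsilonSet X ≃ₜ upsilonSet Y) := by
  let T' : C(X, E) ≃+ C(Y, F) := AddEquiv.ofBijective (⟨T, hadd⟩ : C(X, E) →ₙ+ C(Y, F)) hbij
  have hT : Biseparating.IsSeparating T' := hsep
  have hT' : Biseparating.IsSeparating T'.symm := fun u v huv => by
    have hTT : ∀ u, T (T'.symm u) = u := T'.apply_symm_apply
    simpa using hsep' (T'.symm u) (T'.symm v) (by simpa [hTT] using huv)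
  exact ⟨((hT.supportHomeomorph hT').sets (hT.preimage_supportHomeomorph_upsilonSet hT').symm).symm⟩
end

section
/- Let X and Y be Tychonoff (completely regular Hausdorff) spaces, E and F nontrivial real normed vector spaces, and T : C*(X,E) → C*(Y,F) a biseparating map. If f, g ∈ C*(X,E) satisfy c(f) ⊆ c(g), then for every y ∈ Y with (Tf)(y) ≠ 0, the point ι_Y(y) belongs to the closure in StoneCech Y of ι_Y(c(Tg)), where c(Tg) = {y' ∈ Y : (Tg)(y') ≠ 0}. -/
open scoped BoundedContinuousFunction

/-!
If `ι_Y y` were not in the closure, Urysohn's lemma on the compact space `StoneCech Y` would give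
`φ` with `φ y = 1` vanishing on `c(Tg)`. Writing `φ • Tf = Th`, the cozero sets of `Th` and `Tg`
are disjoint; pulling back along `T`, so are those of `h` and `g`, hence of `h` and `f`, and pushing
forward again, those of `Th` and `Tf`; but both contain `y`.
-/

open Function Set

theorem forall_norm_mul_norm_eq_zero_iff_disjoint_support {α E F : Type*}
    [NormedAddGroup E] [NormedAddGroup F] (f : α → E) (g : α → F) :
    (∀ x, ‖f x‖ * ‖g x‖ = 0) ↔ Disjoint (support f) (support g) := by
  simp [Set.disjoint_left, or_iff_not_imp_left]

theorem exists_bcf_eq_one_eqOn_zero_of_stoneCechUnit_notMem_closure {Y : Type*}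
    [TopologicalSpace Y] {s : Set Y} {y : Y}
    (hy : stoneCechUnit y ∉ closure (stoneCechUnit '' s)) :
    ∃ φ : Y →ᵇ ℝ, φ y = 1 ∧ EqOn φ 0 s := by
  obtain ⟨φ, hφ_zero, hφ_one, -⟩ := exists_continuous_zero_one_of_isClosed isClosed_closure
    isClosed_singleton (disjoint_singleton_right.2 hy)
  refine ⟨(BoundedContinuousFunction.mkOfCompact φ).compContinuous
    ⟨stoneCechUnit, continuous_stoneCechUnit⟩, hφ_one rfl, fun y' hy' => ?_⟩
  exact hφ_zero (subset_closure (mem_image_of_mem _ hy'))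

theorem stmt_10_general {X Y E F : Type*}
    [TopologicalSpace X] [TopologicalSpace Y]
    [NormedAddCommGroup E]
    [NormedAddCommGroup F] [NormedSpace ℝ F]
    (T : (X →ᵇ E) → (Y →ᵇ F))
    (hbij : Function.Bijective T)
    (hsep : ∀ f g : X →ᵇ E, (∀ x, ‖f x‖ * ‖g x‖ = 0) → ∀ y, ‖T f y‖ * ‖T g y‖ = 0)
    (hsep' : ∀ f g : X →ᵇ E, (∀ y, ‖T f y‖ * ‖T g y‖ = 0) → ∀ x, ‖f x‖ * ‖g x‖ = 0)
    (f g : X →ᵇ E) (hfg : {x : X | f x ≠ 0} ⊆ {x : X | g x ≠ 0})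
    (y : Y) (hy : T f y ≠ 0) :
    stoneCechUnit y ∈ closure (stoneCechUnit '' {y' : Y | T g y' ≠ 0}) := by
  simp only [forall_norm_mul_norm_eq_zero_iff_disjoint_support] at hsep hsep'
  by_contra hy_far
  obtain ⟨φ, hφ_one, hφ_zero⟩ := exists_bcf_eq_one_eqOn_zero_of_stoneCechUnit_notMem_closure hy_far
  obtain ⟨h, hh⟩ := hbij.surjective (φ • T f)
  have hTh_Tg : Disjoint (support (T h)) (support (T g)) := by
    rw [hh]
    exact (support_disjoint_iff.2 hφ_zero).mono_left (support_smul_subset_left _ _)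
  have hTh_Tf : Disjoint (support (T h)) (support (T f)) :=
    hsep h f ((hsep' h g hTh_Tg).mono_right hfg)
  have hTh_y : T h y ≠ 0 := by
    rw [hh]
    change φ y • T f y ≠ 0
    rwa [hφ_one, one_smul]
  exact disjoint_left.1 hTh_Tf hTh_y hy

/-- For a biseparating `T : C*(X,E) → C*(Y,F)`, if `c(f) ⊆ c(g)` then for every
`y ∈ Y` with `(Tf)(y) ≠ 0`, the point `ι_Y(y)` lies in the closure in `StoneCech Y` of
`ι_Y(c(Tg))`. -/
theorem stmt_10 {X Y E F : Type*}
    [TopologicalSpace X] [T35Space X] [TopologicalSpace Y] [T35Space Y]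
    [NormedAddCommGroup E] [NormedSpace ℝ E] [Nontrivial E]
    [NormedAddCommGroup F] [NormedSpace ℝ F] [Nontrivial F]
    (T : (X →ᵇ E) → (Y →ᵇ F))
    (hbij : Function.Bijective T)
    (hadd : ∀ f g : X →ᵇ E, T (f + g) = T f + T g)
    (hsep : ∀ f g : X →ᵇ E, (∀ x, ‖f x‖ * ‖g x‖ = 0) → ∀ y, ‖T f y‖ * ‖T g y‖ = 0)
    (hsep' : ∀ f g : X →ᵇ E, (∀ y, ‖T f y‖ * ‖T g y‖ = 0) → ∀ x, ‖f x‖ * ‖g x‖ = 0)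
    (f g : X →ᵇ E) (hfg : {x : X | f x ≠ 0} ⊆ {x : X | g x ≠ 0})
    (y : Y) (hy : T f y ≠ 0) :
    stoneCechUnit y ∈ closure (stoneCechUnit '' {y' : Y | T g y' ≠ 0}) :=
  stmt_10_general T hbij hsep hsep' f g hfg y hy
end
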